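/- In the simulation design, if U = (2S−1)|U'| where S is Bernoulli with success probability q(x) = (1 − 1/Γ + (Γ−1)e^{h(x)})/((Γ − 1/Γ)(1 + e^{h(x)})) conditional on X = x, and the location L given (X=x, U=u) is Bernoulli with logit h(x) + log(Γ)·(1_{u≥0} − 1_{u<0}), then the conditional density ratio satisfies P(U=u | X=x, L=1)/P(U=u | X=x, L=0) = Γ^{1_{u>0} − 1_{u<0}}, so the transport sensitivity model holds exactly with parameter Γ. -/

import Mathlib

open Real

/-- discrete version, `U ∈ {−1,+1}`: in the simulation design,
with `S ~ Bernoulli(q(x))`, `U = 2S − 1` and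
`P(L=1 | X=x, U=u) = σ(h(x) + log(Γ)·u)`, Bayes' rule gives
`P(U=u | X=x, L=1)/P(U=u | X=x, L=0) = Γ^u` for `u = ±1`, i.e. the transport
sensitivity model holds exactly with parameter `Γ`. -/
theorem simulation_design_sensitivity_exact
    {𝒳 : Type*} (Γ : ℝ) (hΓ : 1 < Γ) (h : 𝒳 → ℝ)
    (q σp σm PL1 PL0 : 𝒳 → ℝ)
    -- P(U = +1 | X = x) = q(x):
    (hq : ∀ x, q x = (1 - Γ⁻¹ + (Γ - 1) * exp (h x))
                      / ((Γ - Γ⁻¹) * (1 + exp (h x))))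
    -- P(L = 1 | X = x, U = +1) = σ(h(x) + log Γ):
    (hσp : ∀ x, σp x = 1 / (1 + exp (-(h x + log Γ))))
    -- P(L = 1 | X = x, U = −1) = σ(h(x) − log Γ):
    (hσm : ∀ x, σm x = 1 / (1 + exp (-(h x - log Γ))))
    -- P(L = 1 | X = x) and P(L = 0 | X = x):
    (hPL1 : ∀ x, PL1 x = q x * σp x + (1 - q x) * σm x)
    (hPL0 : ∀ x, PL0 x = q x * (1 - σp x) + (1 - q x) * (1 - σm x)) :
    ∀ x,
      -- ratio of conditional densities of U at u = +1 :
      (q x * σp x / PL1 x) / (q x * (1 - σp x) / PL0 x) = Γ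
      ∧
      -- ratio of conditional densities of U at u = −1 :
      ((1 - q x) * σm x / PL1 x) / ((1 - q x) * (1 - σm x) / PL0 x) = Γ⁻¹ := by
  intro x
  have hG : (0:ℝ) < Γ := by linarith
  have hE : 0 < exp (h x) := exp_pos _
  set E := exp (h x) with hEdef
  have hGne : Γ ≠ 0 := ne_of_gt hG
  have hEne : E ≠ 0 := ne_of_gt hE
  have h1E : (1:ℝ) + E ≠ 0 := by positivity
  have hG1 : Γ + 1 ≠ 0 := by positivity
  have hGE : Γ * E + 1 ≠ 0 := by positivity
  have hEG : E + Γ ≠ 0 := by positivity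
  have hGinv : Γ - Γ⁻¹ ≠ 0 := by
    have : Γ⁻¹ < 1 := by
      rw [inv_lt_one_iff₀]; right; exact hΓ
    intro hc; nlinarith
  have e1 : exp (-(h x + log Γ)) = 1 / (E * Γ) := by
    rw [exp_neg, exp_add, exp_log hG, one_div]
  have e2 : exp (-(h x - log Γ)) = Γ / E := by
    rw [neg_sub, exp_sub, exp_log hG]
  have hd1 : (Γ - Γ⁻¹) * (1 + E) ≠ 0 := mul_ne_zero hGinv h1E
  have hd2 : (Γ + 1) * (1 + E) ≠ 0 := mul_ne_zero hG1 h1E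
  have hq' : q x = (Γ * E + 1) / ((Γ + 1) * (1 + E)) := by
    rw [hq, div_eq_div_iff hd1 hd2]
    field_simp
    ring
  have hσp' : σp x = Γ * E / (Γ * E + 1) := by
    rw [hσp, e1]
    rw [div_eq_div_iff (by positivity) hGE]
    field_simp
  have hσm' : σm x = E / (E + Γ) := by
    rw [hσm, e2]
    rw [div_eq_div_iff (by positivity) hEG]
    field_simp
  have hPL1' : PL1 x = E / (1 + E) := by
    rw [hPL1, hq', hσp', hσm']
    rw [eq_div_iff h1E]
    field_simp
    ring
  have hPL0' : PL0 x = 1 / (1 + E) := by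
    rw [hPL0, hq', hσp', hσm']
    rw [eq_div_iff h1E]
    field_simp
    ring
  have A1 : q x * σp x / PL1 x = Γ / (Γ + 1) := by
    rw [hq', hσp', hPL1']
    rw [div_eq_div_iff (by positivity) hG1]
    field_simp
  have B1 : q x * (1 - σp x) / PL0 x = 1 / (Γ + 1) := by
    rw [hq', hσp', hPL0']
    rw [div_eq_div_iff (by positivity) hG1]
    field_simp
    ring
  have A2 : (1 - q x) * σm x / PL1 x = 1 / (Γ + 1) := by
    rw [hq', hσm', hPL1']
    rw [div_eq_div_iff (by positivity) hG1]
    field_simp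
    ring
  have B2 : (1 - q x) * (1 - σm x) / PL0 x = Γ / (Γ + 1) := by
    rw [hq', hσm', hPL0']
    rw [div_eq_div_iff (by positivity) hG1]
    field_simp
    ring
  rw [A1, B1, A2, B2]
  constructor
  · field_simp
  · rw [div_div_div_eq, one_mul]
    field_simp
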